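/- Let 𝓑 be a unital C*-algebra, η : 𝓑 → 𝓑 a positive bounded linear map, b ∈ H⁺(𝓑), and r > ‖Im(b)⁻¹‖. Then for all w₁, w₂ ∈ D_r one has ‖h_b(w₂) − h_b(w₁)‖ ≤ r²·‖η‖·‖w₂ − w₁‖; that is, the restriction of h_b to D_r is Lipschitz continuous with constant r²‖η‖. -/

import Mathlib

/-- The imaginary part `Im(b) = (b − b*)/(2i)` of an element of a C*-algebra. -/
noncomputable def imPart {B : Type*} [CStarAlgebra B] (b : B) : B :=
  ((2 : ℂ) * Complex.I)⁻¹ • (b - star b)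

/-- The upper half-plane `H⁺(𝓑) = {b : ∃ ε > 0, Im(b) ≥ ε·1}`. -/
def upperHalfPlane (B : Type*) [CStarAlgebra B] [PartialOrder B] : Set B :=
  {b | ∃ ε : ℝ, 0 < ε ∧ (ε : ℂ) • (1 : B) ≤ imPart b}

/-- The lower half-plane `H⁻(𝓑) = {b : ∃ ε > 0, −Im(b) ≥ ε·1}`. -/
def lowerHalfPlane (B : Type*) [CStarAlgebra B] [PartialOrder B] : Set B :=
  {b | ∃ ε : ℝ, 0 < ε ∧ (ε : ℂ) • (1 : B) ≤ -imPart b}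

/-!
If `Im a ≥ ε > 0`, expanding `0 ≤ (a - iε)⋆ (a - iε)` gives `a⋆ a ≥ ε²`, and likewise
`a a⋆ ≥ ε²`; so `a` is invertible and `‖a⁻¹‖² = ‖(a⋆ a)⁻¹‖ ≤ ε⁻²`. A positive map commutes
with `⋆`, hence with `Im`, so for `w ∈ H⁻(𝓑)` we get `Im (b - η w) = Im b - η (Im w) ≥ Im b ≥ r⁻¹`,
the last step by inverting `(Im b)⁻¹ ≤ ‖(Im b)⁻¹‖ < r`. Thus `‖h_b(w)‖ ≤ r` on `H⁻(𝓑)`, and the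
resolvent identity `h_b(w₂) - h_b(w₁) = h_b(w₂) η(w₂ - w₁) h_b(w₁)` gives the bound.
-/

open Complex

section ImPart

variable {A : Type*} [CStarAlgebra A]

lemma ofReal_smul_one (ε : ℝ) : (ε : ℂ) • (1 : A) = algebraMap ℝ A ε := by
  rw [Algebra.algebraMap_eq_smul_one, coe_smul]

lemma imPart_sub (a b : A) : imPart (a - b) = imPart a - imPart b := by
  simp only [imPart, star_sub]
  module

lemma imPart_neg_star (a : A) : imPart (-star a) = imPart a := by
  simp only [imPart, star_neg, star_star]
  module

lemma star_sub_mul_sub_ofReal_mul_I (a : A) (ε : ℝ) :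
    star (a - (ε * I : ℂ) • (1 : A)) * (a - (ε * I : ℂ) • 1)
      = star a * a - (2 * ε) • imPart a + algebraMap ℝ A (ε ^ 2) := by
  simp only [imPart, star_sub, star_smul, star_one, Algebra.algebraMap_eq_smul_one, sub_mul,
    mul_sub, smul_mul_assoc, mul_smul_comm, one_mul, mul_one, star_def, map_mul,
    conj_ofReal, conj_I]
  simp only [← coe_smul, smul_smul, smul_sub]
  match_scalars <;> field_simp <;> ring_nf <;> simp [I_sq]

end ImPart

lemma Ring.inverse_algebraMap {K A : Type*} [Field K] [Semiring A] [Algebra K A] (c : K) :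
    Ring.inverse (algebraMap K A c) = algebraMap K A c⁻¹ := by
  rcases eq_or_ne c 0 with rfl | hc
  · simp
  · exact Ring.inverse_unit ((Units.mk0 c hc).map (algebraMap K A).toMonoidHom)

lemma isUnit_of_isUnit_star_mul_self_of_isUnit_mul_star_self {M : Type*} [Monoid M] [StarMul M]
    {a : M} (h₁ : IsUnit (star a * a)) (h₂ : IsUnit (a * star a)) : IsUnit a :=
  isUnit_iff_exists_and_exists.mpr
    ⟨⟨star a * ↑h₂.unit⁻¹, by rw [← mul_assoc, h₂.mul_val_inv]⟩,
      ⟨↑h₁.unit⁻¹ * star a, by rw [mul_assoc, h₁.val_inv_mul]⟩⟩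

lemma norm_ringInverse_sub_ringInverse_le {R : Type*} [NormedRing R] {x y : R} {r : ℝ}
    (hx : IsUnit x) (hy : IsUnit y) (hxr : ‖Ring.inverse x‖ ≤ r) (hyr : ‖Ring.inverse y‖ ≤ r) :
    ‖Ring.inverse x - Ring.inverse y‖ ≤ r ^ 2 * ‖y - x‖ := by
  rw [Ring.inverse_sub_inverse (iff_of_true hx hy)]
  have hr : 0 ≤ r := (norm_nonneg _).trans hxr
  calc ‖Ring.inverse x * (y - x) * Ring.inverse y‖
      ≤ ‖Ring.inverse x‖ * ‖y - x‖ * ‖Ring.inverse y‖ := norm_mul₃_le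
    _ ≤ r * ‖y - x‖ * r := by gcongr
    _ = r ^ 2 * ‖y - x‖ := by ring

section Order

variable {A : Type*} [CStarAlgebra A] [PartialOrder A] [StarOrderedRing A]

lemma algebraMap_sq_le_star_mul_self_of_le_imPart {a : A} {ε : ℝ} (hε : 0 ≤ ε)
    (h : algebraMap ℝ A ε ≤ imPart a) : algebraMap ℝ A (ε ^ 2) ≤ star a * a := by
  have hsq : 0 ≤ star a * a - (2 * ε) • imPart a + algebraMap ℝ A (ε ^ 2) :=
    star_sub_mul_sub_ofReal_mul_I a ε ▸ star_mul_self_nonneg _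
  calc algebraMap ℝ A (ε ^ 2) = (2 * ε) • algebraMap ℝ A ε - algebraMap ℝ A (ε ^ 2) := by
        rw [Algebra.smul_def, ← map_mul, ← map_sub]; ring_nf
    _ ≤ (2 * ε) • imPart a - algebraMap ℝ A (ε ^ 2) := by gcongr
    _ ≤ star a * a := sub_nonneg.mp (by convert hsq using 1; abel)

lemma algebraMap_sq_le_mul_star_self_of_le_imPart {a : A} {ε : ℝ} (hε : 0 ≤ ε)
    (h : algebraMap ℝ A ε ≤ imPart a) : algebraMap ℝ A (ε ^ 2) ≤ a * star a := by
  simpa using algebraMap_sq_le_star_mul_self_of_le_imPart hε (a := -star a)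
    (by rwa [imPart_neg_star])

lemma isUnit_and_norm_ringInverse_le_of_le_imPart {a : A} {ε : ℝ} (hε : 0 < ε)
    (h : algebraMap ℝ A ε ≤ imPart a) : IsUnit a ∧ ‖Ring.inverse a‖ ≤ ε⁻¹ := by
  have hε2 : IsStrictlyPositive (algebraMap ℝ A (ε ^ 2)) :=
    isStrictlyPositive_algebraMap (by positivity)
  have h₁ := algebraMap_sq_le_star_mul_self_of_le_imPart hε.le h
  have ha : IsUnit a := isUnit_of_isUnit_star_mul_self_of_isUnit_mul_star_self
    (CStarAlgebra.isUnit_of_le _ h₁)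
    (CStarAlgebra.isUnit_of_le _ (algebraMap_sq_le_mul_star_self_of_le_imPart hε.le h))
  refine ⟨ha, ?_⟩
  have hinv : Ring.inverse a * star (Ring.inverse a) ≤ algebraMap ℝ A (ε ^ 2)⁻¹ := by
    calc Ring.inverse a * star (Ring.inverse a) = Ring.inverse (star a * a) := by
          rw [Ring.inverse_mul (.inr ha), Ring.inverse_star]
      _ ≤ Ring.inverse (algebraMap ℝ A (ε ^ 2)) := CStarAlgebra.ringInverse_le_ringInverse h₁
      _ = algebraMap ℝ A (ε ^ 2)⁻¹ := Ring.inverse_algebraMap _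
  have hsq : ‖Ring.inverse a‖ ^ 2 ≤ ε⁻¹ ^ 2 := by
    rw [sq, ← CStarRing.norm_self_mul_star, inv_pow]
    exact (CStarAlgebra.norm_le_iff_le_algebraMap _ (by positivity)
      (mul_star_self_nonneg _)).mpr hinv
  exact (pow_le_pow_iff_left₀ (norm_nonneg _) (by positivity) two_ne_zero).mp hsq

lemma algebraMap_inv_le_of_norm_ringInverse_le {y : A} (hy : IsStrictlyPositive y) {r : ℝ}
    (hr : 0 < r) (h : ‖Ring.inverse y‖ ≤ r) : algebraMap ℝ A r⁻¹ ≤ y := by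
  have hle : Ring.inverse y ≤ algebraMap ℝ A r :=
    (CStarAlgebra.norm_le_iff_le_algebraMap _ hr.le hy.ringInverse.nonneg).mp h
  calc algebraMap ℝ A r⁻¹ = Ring.inverse (algebraMap ℝ A r) := (Ring.inverse_algebraMap r).symm
    _ ≤ Ring.inverse (Ring.inverse y) := CStarAlgebra.ringInverse_le_ringInverse hle hy.ringInverse
    _ = y := Ring.inverse_inverse hy.isUnit

end Order

section PositiveMap

open scoped ComplexStarModule in
lemma LinearMap.map_star_of_map_nonneg {A B : Type*} [NonUnitalCStarAlgebra A] [PartialOrder A]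
    [StarOrderedRing A] [NonUnitalCStarAlgebra B] [PartialOrder B] [StarOrderedRing B]
    (f : A →ₗ[ℂ] B) (hf : ∀ x, 0 ≤ x → 0 ≤ f x) (a : A) : f (star a) = star (f a) := by
  obtain ⟨s, hs, t, ht, rfl⟩ : ∃ s, IsSelfAdjoint s ∧ ∃ t, IsSelfAdjoint t ∧ a = s + I • t :=
    ⟨ℜ a, (ℜ a).2, ℑ a, (ℑ a).2, (realPart_add_I_smul_imaginaryPart a).symm⟩
  have hfs : IsSelfAdjoint (f s) := hs.map' (PositiveLinearMap.mk₀ f hf)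
  have hft : IsSelfAdjoint (f t) := ht.map' (PositiveLinearMap.mk₀ f hf)
  simp [hs.star_eq, ht.star_eq, hfs.star_eq, hft.star_eq]

variable {A : Type*} [CStarAlgebra A] [PartialOrder A] [StarOrderedRing A]

lemma LinearMap.imPart_map_of_map_nonneg (f : A →ₗ[ℂ] A) (hf : ∀ x, 0 ≤ x → 0 ≤ f x) (a : A) :
    imPart (f a) = f (imPart a) := by
  simp only [imPart, map_smul, map_sub, f.map_star_of_map_nonneg hf]

lemma LinearMap.imPart_le_imPart_sub_of_map_nonneg (f : A →ₗ[ℂ] A) (hf : ∀ x, 0 ≤ x → 0 ≤ f x)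
    (a : A) {w : A} (hw : imPart w ≤ 0) : imPart a ≤ imPart (a - f w) := by
  rw [imPart_sub, f.imPart_map_of_map_nonneg hf, sub_eq_add_neg, ← map_neg]
  exact le_add_of_nonneg_right (hf _ (neg_nonneg.mpr hw))

end PositiveMap

theorem hb_lipschitz_on_Dr_general {B : Type*} [CStarAlgebra B]
    [PartialOrder B] [StarOrderedRing B]
    (η : B →L[ℂ] B) (hη : ∀ x : B, 0 ≤ x → 0 ≤ η x)
    (b : B) (hb : b ∈ upperHalfPlane B)
    (r : ℝ) (hr : ‖Ring.inverse (imPart b)‖ < r)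
    (w₁ w₂ : B) (hw₁ : w₁ ∈ lowerHalfPlane B)
    (hw₂ : w₂ ∈ lowerHalfPlane B) :
    ‖Ring.inverse (b - η w₂) - Ring.inverse (b - η w₁)‖ ≤
      r ^ 2 * ‖η‖ * ‖w₂ - w₁‖ := by
  obtain ⟨ε, hε, hεb⟩ := hb
  rw [ofReal_smul_one] at hεb
  have hr₀ : 0 < r := (norm_nonneg _).trans_lt hr
  have hrb : algebraMap ℝ B r⁻¹ ≤ imPart b := algebraMap_inv_le_of_norm_ringInverse_le
    ((isStrictlyPositive_algebraMap hε).of_le hεb) hr₀ hr.le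
  have hres (w : B) (hw : w ∈ lowerHalfPlane B) :
      IsUnit (b - η w) ∧ ‖Ring.inverse (b - η w)‖ ≤ r := by
    obtain ⟨δ, hδ, hδw⟩ := hw
    rw [ofReal_smul_one] at hδw
    have hIm : imPart w ≤ 0 :=
      neg_nonneg.mp ((isStrictlyPositive_algebraMap hδ).nonneg.trans hδw)
    simpa using isUnit_and_norm_ringInverse_le_of_le_imPart (inv_pos.mpr hr₀)
      (hrb.trans ((η : B →ₗ[ℂ] B).imPart_le_imPart_sub_of_map_nonneg hη b hIm))
  obtain ⟨hu₁, hn₁⟩ := hres w₁ hw₁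
  obtain ⟨hu₂, hn₂⟩ := hres w₂ hw₂
  calc _ ≤ r ^ 2 * ‖(b - η w₁) - (b - η w₂)‖ := norm_ringInverse_sub_ringInverse_le hu₂ hu₁ hn₂ hn₁
    _ = r ^ 2 * ‖η (w₂ - w₁)‖ := by rw [map_sub, sub_sub_sub_cancel_left]
    _ ≤ r ^ 2 * (‖η‖ * ‖w₂ - w₁‖) := by gcongr; exact η.le_opNorm _
    _ = r ^ 2 * ‖η‖ * ‖w₂ - w₁‖ := by ring

/-- The map `h_b(w) = (b − η(w))⁻¹` is Lipschitz on
`D_r = {w ∈ H⁻(𝓑) : ‖w‖ < r}` with constant `r²‖η‖`, for `r > ‖Im(b)⁻¹‖`. -/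
theorem hb_lipschitz_on_Dr {B : Type*} [CStarAlgebra B]
    [PartialOrder B] [StarOrderedRing B]
    (η : B →L[ℂ] B) (hη : ∀ x : B, 0 ≤ x → 0 ≤ η x)
    (b : B) (hb : b ∈ upperHalfPlane B)
    (r : ℝ) (hr : ‖Ring.inverse (imPart b)‖ < r)
    (w₁ w₂ : B) (hw₁ : w₁ ∈ lowerHalfPlane B) (hw₁r : ‖w₁‖ < r)
    (hw₂ : w₂ ∈ lowerHalfPlane B) (hw₂r : ‖w₂‖ < r) :
    ‖Ring.inverse (b - η w₂) - Ring.inverse (b - η w₁)‖ ≤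
      r ^ 2 * ‖η‖ * ‖w₂ - w₁‖ :=
  hb_lipschitz_on_Dr_general η hη b hb r hr w₁ w₂ hw₁ hw₂
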